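/- arXiv:2303.17889 — 4 statements merged into one kernel-verified Lean document; each statement's English description precedes it below -/
import Mathlib

section
/- A univariate real polynomial p of odd degree d is nonnegative on the interval [a,b] (with a < b) if and only if there exist SOS polynomials f and g with deg(f) ≤ d−1 and deg(g) ≤ d−1 such that p(t) = (t−a)·f(t) + (b−t)·g(t) for all t. -/
/-!
A polynomial that is nonnegative on `[a, b]` factors into linear factors that are nonnegative at
`a` and `b`, hence nonnegative combinations of `u = X - a` and `v = b - X`, and quadratic sums of
squares (double roots inside `(a, b)`, pairs of conjugate complex roots). Multiplying by
`αu + βv` swaps the shapes `σ + uvτ` and `uσ + vτ` of a polynomial with sums of squares `σ, τ`: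
`(αu + βv)(σ + uvτ) = u(ασ + βv²τ) + v(βσ + αu²τ)` and
`(αu + βv)(uσ + vτ) = (αu²σ + βv²τ) + uv(βσ + ατ)`.
So, by induction on the degree, a polynomial of odd degree `d` that is nonnegative on `[a, b]` has
the second shape, with summands of degree at most `d`.
-/

open Polynomial

/-- A polynomial is a sum of squares. -/
def IsSOS (p : Polynomial ℝ) : Prop :=
  ∃ (k : ℕ) (q : Fin k → Polynomial ℝ), p = ∑ i, (q i) ^ 2

open Set

theorem isSOS_iff_isSumSq {p : ℝ[X]} : IsSOS p ↔ IsSumSq p := by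
  refine ⟨fun ⟨k, q, hp⟩ => hp ▸ IsSumSq.sum_sq _ _, fun hp => ?_⟩
  induction hp with
  | zero => exact ⟨0, ![], by simp⟩
  | sq_add q _ ih =>
    obtain ⟨k, qs, rfl⟩ := ih
    exact ⟨k + 1, Fin.cons q qs, by simp [Fin.sum_univ_succ, sq]⟩

theorem IsSumSq.eval_nonneg {p : ℝ[X]} (hp : IsSumSq p) (t : ℝ) : 0 ≤ p.eval t := by
  induction hp with
  | zero => simp
  | sq_add q _ ih => simpa only [eval_add, eval_mul] using add_nonneg (mul_self_nonneg _) ih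

namespace Polynomial

theorem isSumSq_C {c : ℝ} (hc : 0 ≤ c) : IsSumSq (C c) := by
  simpa [← C_mul, Real.mul_self_sqrt hc] using IsSumSq.mul_self (C √c)

theorem natDegree_C_sub_X (c : ℝ) : (C c - X).natDegree = 1 := by
  rw [← neg_sub, natDegree_neg, natDegree_X_sub_C]

theorem natDegree_le_sub_one_of_natDegree_mul_le {u q : ℝ[X]} {d : ℕ} (hu : u.natDegree = 1)
    (h : (u * q).natDegree ≤ d) : q.natDegree ≤ d - 1 := by
  rcases eq_or_ne q 0 with rfl | hq
  · simp
  · rw [natDegree_mul (ne_zero_of_natDegree_gt (hu ▸ zero_lt_one)) hq, hu] at h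
    omega

theorem eq_interpolate_of_natDegree_le_one {a b : ℝ} (hab : a ≠ b) {ℓ : ℝ[X]}
    (hℓ : ℓ.natDegree ≤ 1) :
    ℓ = C (ℓ.eval b / (b - a)) * (X - C a) + C (ℓ.eval a / (b - a)) * (C b - X) := by
  have hba : b - a ≠ 0 := sub_ne_zero.2 hab.symm
  rw [eq_X_add_C_of_natDegree_le_one hℓ]
  refine Polynomial.funext fun t => ?_
  simp only [eval_add, eval_mul, eval_C, eval_X, eval_sub]
  field_simp
  ring

theorem eval_nonneg_of_mul_nonneg {a b r : ℝ} (hab : a < b) {ℓ q : ℝ[X]}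
    (hℓ : ∀ t ∈ Icc a b, t ≠ r → 0 < ℓ.eval t) (h : ∀ t ∈ Icc a b, 0 ≤ (ℓ * q).eval t) :
    ∀ t ∈ Icc a b, 0 ≤ q.eval t := by
  have hsub : Ioo a b ∩ {r}ᶜ ⊆ {t | 0 ≤ q.eval t} := fun t ⟨ht, htr⟩ => by
    have := h t (Ioo_subset_Icc_self ht)
    rw [eval_mul] at this
    exact nonneg_of_mul_nonneg_right this (hℓ t (Ioo_subset_Icc_self ht) htr)
  have hdense : Ioo a b ⊆ closure (Ioo a b ∩ {r}ᶜ) := by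
    simpa [closure_compl_singleton] using isOpen_Ioo.inter_closure (t := ({r}ᶜ : Set ℝ))
  calc Icc a b = closure (Ioo a b) := (closure_Ioo hab.ne).symm
    _ ⊆ closure (Ioo a b ∩ {r}ᶜ) := closure_minimal hdense isClosed_closure
    _ ⊆ {t | 0 ≤ q.eval t} := closure_minimal hsub (isClosed_le continuous_const q.continuous)

/- Lukács representations `σ + uvτ` and `uσ + vτ`. Degrees are bounded summand by summand, as the
leading terms of the summands may cancel. -/
def EvenLukacsRep (u v : ℝ[X]) (d : ℕ) (p : ℝ[X]) : Prop :=
  ∃ σ τ : ℝ[X], IsSumSq σ ∧ IsSumSq τ ∧ σ.natDegree ≤ d ∧ (u * v * τ).natDegree ≤ d ∧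
    p = σ + u * v * τ

def OddLukacsRep (u v : ℝ[X]) (d : ℕ) (p : ℝ[X]) : Prop :=
  ∃ σ τ : ℝ[X], IsSumSq σ ∧ IsSumSq τ ∧ (u * σ).natDegree ≤ d ∧ (v * τ).natDegree ≤ d ∧
    p = u * σ + v * τ

def LukacsRep (u v : ℝ[X]) (d : ℕ) (p : ℝ[X]) : Prop :=
  (Even d → EvenLukacsRep u v d p) ∧ (Odd d → OddLukacsRep u v d p)

section LukacsRep

variable {u v p s : ℝ[X]} {d e : ℕ}

theorem natDegree_C_mul_mul_le {w q : ℝ[X]} (c : ℝ) (hw : w.natDegree ≤ 1)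
    (hq : q.natDegree ≤ d) : (C c * (w * q)).natDegree ≤ 1 + d :=
  (natDegree_C_mul_le _ _).trans (natDegree_mul_le_of_le hw hq)

theorem EvenLukacsRep.linear_mul (hu : u.natDegree ≤ 1) (hv : v.natDegree ≤ 1) {α β : ℝ}
    (hα : 0 ≤ α) (hβ : 0 ≤ β) (hp : EvenLukacsRep u v d p) :
    OddLukacsRep u v (1 + d) ((C α * u + C β * v) * p) := by
  obtain ⟨σ, τ, hσ, hτ, dσ, dτ, rfl⟩ := hp
  refine ⟨C α * σ + C β * (v * v * τ), C β * σ + C α * (u * u * τ), ?_, ?_, ?_, ?_, by ring⟩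
  · exact ((isSumSq_C hα).mul hσ).add ((isSumSq_C hβ).mul ((IsSumSq.mul_self v).mul hτ))
  · exact ((isSumSq_C hβ).mul hσ).add ((isSumSq_C hα).mul ((IsSumSq.mul_self u).mul hτ))
  · rw [show u * (C α * σ + C β * (v * v * τ)) = C α * (u * σ) + C β * (v * (u * v * τ)) by ring]
    exact natDegree_add_le_of_degree_le (natDegree_C_mul_mul_le _ hu dσ)
      (natDegree_C_mul_mul_le _ hv dτ)
  · rw [show v * (C β * σ + C α * (u * u * τ)) = C β * (v * σ) + C α * (u * (u * v * τ)) by ring]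
    exact natDegree_add_le_of_degree_le (natDegree_C_mul_mul_le _ hv dσ)
      (natDegree_C_mul_mul_le _ hu dτ)

theorem OddLukacsRep.linear_mul (hu : u.natDegree ≤ 1) (hv : v.natDegree ≤ 1) {α β : ℝ}
    (hα : 0 ≤ α) (hβ : 0 ≤ β) (hp : OddLukacsRep u v d p) :
    EvenLukacsRep u v (1 + d) ((C α * u + C β * v) * p) := by
  obtain ⟨σ, τ, hσ, hτ, dσ, dτ, rfl⟩ := hp
  refine ⟨C α * (u * u * σ) + C β * (v * v * τ), C β * σ + C α * τ, ?_, ?_, ?_, ?_, by ring⟩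
  · exact ((isSumSq_C hα).mul ((IsSumSq.mul_self u).mul hσ)).add
      ((isSumSq_C hβ).mul ((IsSumSq.mul_self v).mul hτ))
  · exact ((isSumSq_C hβ).mul hσ).add ((isSumSq_C hα).mul hτ)
  · rw [show C α * (u * u * σ) + C β * (v * v * τ) = C α * (u * (u * σ)) + C β * (v * (v * τ))
      by ring]
    exact natDegree_add_le_of_degree_le (natDegree_C_mul_mul_le _ hu dσ)
      (natDegree_C_mul_mul_le _ hv dτ)
  · rw [show u * v * (C β * σ + C α * τ) = C β * (v * (u * σ)) + C α * (u * (v * τ)) by ring]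
    exact natDegree_add_le_of_degree_le (natDegree_C_mul_mul_le _ hv dσ)
      (natDegree_C_mul_mul_le _ hu dτ)

theorem EvenLukacsRep.sumSq_mul (hs : IsSumSq s) (hse : s.natDegree ≤ e)
    (hp : EvenLukacsRep u v d p) : EvenLukacsRep u v (e + d) (s * p) := by
  obtain ⟨σ, τ, hσ, hτ, dσ, dτ, rfl⟩ := hp
  refine ⟨s * σ, s * τ, hs.mul hσ, hs.mul hτ, natDegree_mul_le_of_le hse dσ, ?_, by ring⟩
  rw [mul_left_comm]
  exact natDegree_mul_le_of_le hse dτ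

theorem OddLukacsRep.sumSq_mul (hs : IsSumSq s) (hse : s.natDegree ≤ e)
    (hp : OddLukacsRep u v d p) : OddLukacsRep u v (e + d) (s * p) := by
  obtain ⟨σ, τ, hσ, hτ, dσ, dτ, rfl⟩ := hp
  refine ⟨s * σ, s * τ, hs.mul hσ, hs.mul hτ, ?_, ?_, by ring⟩ <;> rw [mul_left_comm]
  exacts [natDegree_mul_le_of_le hse dσ, natDegree_mul_le_of_le hse dτ]

theorem lukacsRep_C {c : ℝ} (hc : 0 ≤ c) : LukacsRep u v 0 (C c) :=
  ⟨fun _ => ⟨C c, 0, isSumSq_C hc, .zero, by simp, by simp, by simp⟩,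
    fun h => absurd h Nat.not_odd_zero⟩

theorem LukacsRep.linear_mul (hu : u.natDegree ≤ 1) (hv : v.natDegree ≤ 1) {α β : ℝ}
    (hα : 0 ≤ α) (hβ : 0 ≤ β) (hp : LukacsRep u v d p) :
    LukacsRep u v (1 + d) ((C α * u + C β * v) * p) :=
  ⟨fun h => (hp.2 (by grind)).linear_mul hu hv hα hβ,
    fun h => (hp.1 (by grind)).linear_mul hu hv hα hβ⟩

theorem LukacsRep.sumSq_mul (hs : IsSumSq s) (hs2 : s.natDegree ≤ 2) (hp : LukacsRep u v d p) :
    LukacsRep u v (2 + d) (s * p) :=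
  ⟨fun h => (hp.1 (by grind)).sumSq_mul hs hs2, fun h => (hp.2 (by grind)).sumSq_mul hs hs2⟩

end LukacsRep

theorem LukacsRep.mul_of_natDegree_le_one {a b : ℝ} (hab : a < b) {ℓ p : ℝ[X]} {d : ℕ}
    (hℓ : ℓ.natDegree ≤ 1) (ha : 0 ≤ ℓ.eval a) (hb : 0 ≤ ℓ.eval b)
    (hp : LukacsRep (X - C a) (C b - X) d p) :
    LukacsRep (X - C a) (C b - X) (1 + d) (ℓ * p) := by
  have hba : 0 ≤ b - a := sub_nonneg.2 hab.le
  rw [eq_interpolate_of_natDegree_le_one hab.ne hℓ]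
  exact hp.linear_mul (natDegree_X_sub_C a).le (natDegree_C_sub_X b).le (div_nonneg hb hba)
    (div_nonneg ha hba)

theorem sq_dvd_of_isRoot_of_nonneg {a b r : ℝ} {p : ℝ[X]} (hr : r ∈ Ioo a b) (hroot : p.IsRoot r)
    (hp : ∀ t ∈ Icc a b, 0 ≤ p.eval t) : (X - C r) ^ 2 ∣ p := by
  obtain ⟨q, rfl⟩ := dvd_iff_isRoot.2 hroot
  have hright : 0 ≤ q.eval r :=
    eval_nonneg_of_mul_nonneg hr.2 (ℓ := X - C r) (r := r)
      (fun t ht htr => by simpa using lt_of_le_of_ne ht.1 (Ne.symm htr))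
      (fun t ht => hp t ⟨hr.1.le.trans ht.1, ht.2⟩) r ⟨le_rfl, hr.2.le⟩
  have hleft : 0 ≤ (-q).eval r :=
    eval_nonneg_of_mul_nonneg hr.1 (ℓ := C r - X) (r := r)
      (fun t ht htr => by simpa using lt_of_le_of_ne ht.2 htr)
      (fun t ht => by
        rw [show (C r - X) * -q = (X - C r) * q by ring]
        exact hp t ⟨ht.1, ht.2.trans hr.2.le⟩) r ⟨hr.1.le, le_rfl⟩
  rw [eval_neg, neg_nonneg] at hleft
  obtain ⟨h, rfl⟩ := dvd_iff_isRoot.2 (le_antisymm hleft hright)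
  exact ⟨h, by ring⟩

theorem exists_sq_add_C_sq_dvd {p : ℝ[X]} (hp : 0 < p.natDegree) (hroot : ∀ r, ¬p.IsRoot r) :
    ∃ x y : ℝ, y ≠ 0 ∧ (X - C x) ^ 2 + C (y ^ 2) ∣ p := by
  obtain ⟨z, hz⟩ := IsAlgClosed.exists_aeval_eq_zero ℂ p (natDegree_pos_iff_degree_pos.1 hp).ne'
  have him : z.im ≠ 0 := fun him => hroot z.re <| by
    rw [← Complex.re_add_im z, him, Complex.ofReal_zero, zero_mul, add_zero,
      ← Complex.coe_algebraMap, aeval_algebraMap_apply_eq_algebraMap_eval] at hz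
    simpa using hz
  refine ⟨z.re, z.im, him, ?_⟩
  convert p.quadratic_dvd_of_aeval_eq_zero_im_ne_zero hz him using 1
  rw [Complex.sq_norm, Complex.normSq_apply]
  simp only [C_add, C_mul, C_pow, map_ofNat]
  ring

theorem exists_factor_of_nonneg {a b : ℝ} (hab : a < b) {p : ℝ[X]} (hdeg : 0 < p.natDegree)
    (hp : ∀ t ∈ Icc a b, 0 ≤ p.eval t) :
    ∃ f q : ℝ[X], p = f * q ∧ (∀ t ∈ Icc a b, 0 ≤ q.eval t) ∧
      ((f.natDegree = 1 ∧ 0 ≤ f.eval a ∧ 0 ≤ f.eval b) ∨ (f.natDegree = 2 ∧ IsSumSq f)) := by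
  by_cases hroot : ∃ r, p.IsRoot r
  · obtain ⟨r, hr⟩ := hroot
    obtain ⟨q, hq⟩ := dvd_iff_isRoot.2 hr
    rcases le_or_gt r a with hra | hra
    · refine ⟨X - C r, q, hq, eval_nonneg_of_mul_nonneg hab (r := a) ?_ (hq ▸ hp),
        .inl ⟨natDegree_X_sub_C r, by simpa using hra, by simpa using hra.trans hab.le⟩⟩
      intro t ht hta
      simpa using hra.trans_lt (lt_of_le_of_ne ht.1 (Ne.symm hta))
    rcases le_or_gt b r with hrb | hrb
    · have hq' : p = (C r - X) * -q := by rw [hq]; ring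
      refine ⟨C r - X, -q, hq', eval_nonneg_of_mul_nonneg hab (r := b) ?_ (hq' ▸ hp),
        .inl ⟨natDegree_C_sub_X r, by simpa using hab.le.trans hrb, by simpa using hrb⟩⟩
      intro t ht htb
      simpa using (lt_of_le_of_ne ht.2 htb).trans_le hrb
    obtain ⟨h, hh⟩ := sq_dvd_of_isRoot_of_nonneg ⟨hra, hrb⟩ hr hp
    refine ⟨(X - C r) ^ 2, h, hh, eval_nonneg_of_mul_nonneg hab (r := r) ?_ (hh ▸ hp),
      .inr ⟨by simp, sq (X - C r) ▸ IsSumSq.mul_self _⟩⟩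
    intro t _ htr
    simpa using sq_pos_of_ne_zero (sub_ne_zero.2 htr)
  · simp only [not_exists] at hroot
    obtain ⟨x, y, hy, h, hh⟩ := exists_sq_add_C_sq_dvd hdeg hroot
    refine ⟨(X - C x) ^ 2 + C (y ^ 2), h, hh, eval_nonneg_of_mul_nonneg hab (r := a) ?_ (hh ▸ hp),
      .inr ⟨by compute_degree!, ?_⟩⟩
    · intro t _ _
      simp only [eval_add, eval_pow, eval_sub, eval_X, eval_C]
      positivity
    · rw [sq (X - C x)]
      exact (IsSumSq.mul_self _).add (isSumSq_C (sq_nonneg y))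

theorem lukacsRep_of_nonneg {a b : ℝ} (hab : a < b) {p : ℝ[X]}
    (hp : ∀ t ∈ Icc a b, 0 ≤ p.eval t) : LukacsRep (X - C a) (C b - X) p.natDegree p := by
  induction hn : p.natDegree using Nat.strong_induction_on generalizing p with
  | _ n ih =>
    subst hn
    rcases Nat.eq_zero_or_pos p.natDegree with h0 | hpos
    · have hc := hp a ⟨le_rfl, hab.le⟩
      rw [eq_C_of_natDegree_eq_zero h0, eval_C] at hc
      rw [h0, eq_C_of_natDegree_eq_zero h0]
      exact lukacsRep_C hc
    obtain ⟨f, q, rfl, hq, hf⟩ := exists_factor_of_nonneg hab hpos hp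
    obtain ⟨hf0, hq0⟩ := mul_ne_zero_iff.1 (ne_zero_of_natDegree_gt hpos)
    rw [natDegree_mul hf0 hq0] at ih ⊢
    rcases hf with ⟨hf1, ha, hb⟩ | ⟨hf2, hs⟩
    · rw [hf1]
      exact (ih _ (by omega) hq rfl).mul_of_natDegree_le_one hab hf1.le ha hb
    · rw [hf2]
      exact (ih _ (by omega) hq rfl).sumSq_mul hs hf2.le

end Polynomial

theorem stmt0 (a b : ℝ) (hab : a < b) (p : Polynomial ℝ) (hodd : Odd p.natDegree) :
    (∀ t ∈ Set.Icc a b, 0 ≤ p.eval t) ↔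
      ∃ f g : Polynomial ℝ, IsSOS f ∧ IsSOS g ∧
        f.natDegree ≤ p.natDegree - 1 ∧ g.natDegree ≤ p.natDegree - 1 ∧
        ∀ t : ℝ, p.eval t = (t - a) * f.eval t + (b - t) * g.eval t := by
  constructor
  · intro hp
    obtain ⟨f, g, hf, hg, hdf, hdg, hfg⟩ := (lukacsRep_of_nonneg hab hp).2 hodd
    refine ⟨f, g, isSOS_iff_isSumSq.2 hf, isSOS_iff_isSumSq.2 hg,
      natDegree_le_sub_one_of_natDegree_mul_le (natDegree_X_sub_C a) hdf,
      natDegree_le_sub_one_of_natDegree_mul_le (natDegree_C_sub_X b) hdg, fun t => ?_⟩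
    simp [hfg]
  · rintro ⟨f, g, hf, hg, -, -, hfg⟩ t ⟨hat, htb⟩
    rw [hfg t]
    have hft := (isSOS_iff_isSumSq.1 hf).eval_nonneg t
    have hgt := (isSOS_iff_isSumSq.1 hg).eval_nonneg t
    have hta : 0 ≤ t - a := sub_nonneg.2 hat
    have hbt : 0 ≤ b - t := sub_nonneg.2 htb
    positivity
end

section
/- A univariate real polynomial p of even degree d is nonnegative on the interval [a,b] (with a < b) if and only if there exist SOS polynomials f and g with deg(f) ≤ d and deg(g) ≤ d−2 such that p(t) = f(t) + (t−a)(b−t)·g(t) for all t. -/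
/-!
Peel off quadratic factors. If `p ≥ 0` on `[a, b]` has degree at least two, it has a quadratic
factor `M` of the form `f + (X - a)(b - X) g` with `f, g` sums of squares of degree at most two:
`(X - r)²` for a root `r ∈ (a, b)`, which is a local minimum and hence a double root;
`(X - Re z)² + (Im z)²` for a non-real root `z`; otherwise a product `ℓ ℓ'` of linear factors,
nonnegative on `[a, b]`, and `ℓ = λ (X - a) + μ (b - X)` with `λ, μ ≥ 0` gives
`ℓ ℓ' = λλ' (X - a)² + μμ' (b - X)² + (λμ' + μλ') (X - a)(b - X)`.
The quotient `p / M` is again nonnegative on `[a, b]` (by continuity at the finitely many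
zeros of `M`), and such representations multiply, with degrees adding, because
`((X - a)(b - X))²` is a square.
-/

open Polynomial

open Set

theorem Polynomial.isSumSq_C_s1 {c : ℝ} (hc : 0 ≤ c) : IsSumSq (C c) := by
  rw [← Real.mul_self_sqrt hc, C_mul]
  exact IsSumSq.mul_self _

noncomputable def intervalWeight (a b : ℝ) : ℝ[X] := (X - C a) * (C b - X)

@[simp]
theorem eval_intervalWeight (a b t : ℝ) : (intervalWeight a b).eval t = (t - a) * (b - t) := by
  simp [intervalWeight]

theorem natDegree_intervalWeight (a b : ℝ) : (intervalWeight a b).natDegree = 2 := by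
  unfold intervalWeight; compute_degree!

theorem intervalWeight_ne_zero (a b : ℝ) : intervalWeight a b ≠ 0 :=
  ne_zero_of_natDegree_gt (natDegree_intervalWeight a b ▸ two_pos)

/-- The degree-`n` part of the quadratic module generated by `(X - a)(b - X)`. Bounding the degree
of the summand `(X - a)(b - X) g` rather than that of `g` avoids the truncated `n - 2`. -/
def InQuadModule (a b : ℝ) (n : ℕ) (p : ℝ[X]) : Prop :=
  ∃ f g : ℝ[X], IsSumSq f ∧ IsSumSq g ∧ f.natDegree ≤ n ∧
    (intervalWeight a b * g).natDegree ≤ n ∧ p = f + intervalWeight a b * g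

theorem Polynomial.exists_nonneg_combination_of_natDegree_le_one {a b : ℝ} (hab : a < b) {ℓ : ℝ[X]}
    (hℓ : ℓ.natDegree ≤ 1) (ha : 0 ≤ ℓ.eval a) (hb : 0 ≤ ℓ.eval b) :
    ∃ u v : ℝ, 0 ≤ u ∧ 0 ≤ v ∧ ℓ = C u * (X - C a) + C v * (C b - X) := by
  have hba : 0 < b - a := sub_pos.2 hab
  refine ⟨ℓ.eval b / (b - a), ℓ.eval a / (b - a), by positivity, by positivity, ?_⟩
  have heval : ∀ t, ℓ.eval t = ℓ.coeff 1 * t + ℓ.coeff 0 := fun t => by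
    conv_lhs => rw [eq_X_add_C_of_natDegree_le_one hℓ]
    simp
  refine Polynomial.funext fun t => ?_
  simp only [eval_add, eval_mul, eval_C, eval_X, eval_sub, heval]
  field_simp
  ring

namespace InQuadModule

variable {a b : ℝ} {m n : ℕ} {p q : ℝ[X]}

theorem of_isSumSq (hp : IsSumSq p) (hn : p.natDegree ≤ n) : InQuadModule a b n p :=
  ⟨p, 0, hp, .zero, hn, by simp, by simp⟩

theorem sq (hq : q.natDegree ≤ 1) : InQuadModule a b 2 (q ^ 2) :=
  of_isSumSq (IsSquare.isSumSq ⟨q, _root_.sq q⟩) (natDegree_pow_le_of_le 2 hq)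

theorem weight : InQuadModule a b 2 (intervalWeight a b) :=
  ⟨0, 1, .zero, .one, by simp, by simp [natDegree_intervalWeight], by simp⟩

theorem add (hp : InQuadModule a b n p) (hq : InQuadModule a b n q) :
    InQuadModule a b n (p + q) := by
  obtain ⟨f₁, g₁, hf₁, hg₁, hf₁n, hg₁n, rfl⟩ := hp
  obtain ⟨f₂, g₂, hf₂, hg₂, hf₂n, hg₂n, rfl⟩ := hq
  refine ⟨f₁ + f₂, g₁ + g₂, hf₁.add hf₂, hg₁.add hg₂,
    (natDegree_add_le _ _).trans (max_le hf₁n hf₂n), ?_, by ring⟩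
  rw [mul_add]
  exact (natDegree_add_le _ _).trans (max_le hg₁n hg₂n)

theorem mul (hp : InQuadModule a b n p) (hq : InQuadModule a b m q) :
    InQuadModule a b (n + m) (p * q) := by
  obtain ⟨f₁, g₁, hf₁, hg₁, hf₁n, hg₁n, rfl⟩ := hp
  obtain ⟨f₂, g₂, hf₂, hg₂, hf₂m, hg₂m, rfl⟩ := hq
  set w := intervalWeight a b
  have hsq : w * g₁ * (w * g₂) = w * w * (g₁ * g₂) := by ring
  refine ⟨f₁ * f₂ + w * g₁ * (w * g₂), f₁ * g₂ + g₁ * f₂,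
    (hf₁.mul hf₂).add (hsq ▸ (IsSumSq.mul_self w).mul (hg₁.mul hg₂)),
    (hf₁.mul hg₂).add (hg₁.mul hf₂), ?_, ?_, by ring⟩
  · refine (natDegree_add_le _ _).trans (max_le ?_ ?_) <;>
      refine natDegree_mul_le.trans ?_ <;> omega
  · rw [show w * (f₁ * g₂ + g₁ * f₂) = f₁ * (w * g₂) + w * g₁ * f₂ by ring]
    refine (natDegree_add_le _ _).trans (max_le ?_ ?_) <;>
      refine natDegree_mul_le.trans ?_ <;> omega

theorem C_mul {c : ℝ} (hc : 0 ≤ c) (hp : InQuadModule a b n p) : InQuadModule a b n (C c * p) := by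
  simpa using (of_isSumSq (isSumSq_C_s1 hc) (natDegree_C c).le).mul hp

theorem eval_nonneg (hp : InQuadModule a b n p) {t : ℝ} (ht : t ∈ Icc a b) : 0 ≤ p.eval t := by
  obtain ⟨f, g, hf, hg, -, -, rfl⟩ := hp
  rw [eval_add, eval_mul, eval_intervalWeight]
  exact add_nonneg (hf.eval_nonneg t)
    (mul_nonneg (mul_nonneg (sub_nonneg.2 ht.1) (sub_nonneg.2 ht.2)) (hg.eval_nonneg t))

theorem mul_of_natDegree_le_one (hab : a < b) {ℓ₁ ℓ₂ : ℝ[X]}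
    (hℓ₁ : ℓ₁.natDegree ≤ 1) (ha₁ : 0 ≤ ℓ₁.eval a) (hb₁ : 0 ≤ ℓ₁.eval b)
    (hℓ₂ : ℓ₂.natDegree ≤ 1) (ha₂ : 0 ≤ ℓ₂.eval a) (hb₂ : 0 ≤ ℓ₂.eval b) :
    InQuadModule a b 2 (ℓ₁ * ℓ₂) := by
  obtain ⟨u₁, v₁, hu₁, hv₁, rfl⟩ := exists_nonneg_combination_of_natDegree_le_one hab hℓ₁ ha₁ hb₁
  obtain ⟨u₂, v₂, hu₂, hv₂, rfl⟩ := exists_nonneg_combination_of_natDegree_le_one hab hℓ₂ ha₂ hb₂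
  have hexpand : (C u₁ * (X - C a) + C v₁ * (C b - X)) * (C u₂ * (X - C a) + C v₂ * (C b - X)) =
      C (u₁ * u₂) * (X - C a) ^ 2 + C (v₁ * v₂) * (C b - X) ^ 2 +
        C (u₁ * v₂ + v₁ * u₂) * intervalWeight a b := by
    simp only [intervalWeight, map_mul, map_add]
    ring
  rw [hexpand]
  exact (((sq (by compute_degree)).C_mul (by positivity)).add
    ((sq (by compute_degree)).C_mul (by positivity))).add (weight.C_mul (by positivity))

end InQuadModule

theorem exists_associated_X_sub_C_nonneg {a b r : ℝ} (hab : a ≤ b) (hr : r ∉ Ioo a b) :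
    ∃ ℓ : ℝ[X], Associated ℓ (X - C r) ∧ ℓ.natDegree ≤ 1 ∧ 0 ≤ ℓ.eval a ∧ 0 ≤ ℓ.eval b := by
  rcases le_or_gt r a with hra | har
  · exact ⟨X - C r, .refl _, natDegree_X_sub_C_le r, by simpa, by simp; linarith⟩
  · have hbr : b ≤ r := not_lt.1 fun hrb => hr ⟨har, hrb⟩
    refine ⟨C r - X, ?_, by compute_degree, by simp; linarith, by simpa⟩
    have h := (Associated.refl (X - C r)).neg_left
    rwa [neg_sub] at h

theorem Polynomial.sq_X_sub_C_dvd_of_isLocalMin {p : ℝ[X]} {r : ℝ} (hp : p ≠ 0)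
    (hroot : p.IsRoot r) (hmin : IsLocalMin (fun t => p.eval t) r) : (X - C r) ^ 2 ∣ p := by
  rw [← le_rootMultiplicity_iff hp]
  refine (one_lt_rootMultiplicity_iff_isRoot hp).2 ⟨hroot, ?_⟩
  simpa [IsRoot, Polynomial.deriv] using hmin.deriv_eq_zero

theorem Polynomial.sq_add_sq_dvd_of_aeval_eq_zero {p : ℝ[X]} {z : ℂ} (hz : aeval z p = 0)
    (him : z.im ≠ 0) : (X - C z.re) ^ 2 + C (z.im ^ 2) ∣ p := by
  convert p.quadratic_dvd_of_aeval_eq_zero_im_ne_zero hz him using 1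
  rw [Complex.sq_norm, Complex.normSq_apply, C_add, C_mul, C_mul, C_mul, map_ofNat C 2, C_pow]
  ring

theorem Polynomial.exists_isRoot_of_forall_aeval_eq_zero_im {p : ℝ[X]} (hp : 0 < p.natDegree)
    (hreal : ∀ z : ℂ, aeval z p = 0 → z.im = 0) : ∃ r, p.IsRoot r := by
  obtain ⟨z, hz⟩ := IsAlgClosed.exists_aeval_eq_zero ℂ p (natDegree_pos_iff_degree_pos.1 hp).ne'
  have hzre : (z.re : ℂ) = z := Complex.ext rfl (by simp [hreal z hz])
  refine ⟨z.re, ?_⟩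
  rw [IsRoot, ← Complex.ofReal_inj, Complex.ofReal_zero, ← hz, ← hzre]
  exact (aeval_algebraMap_apply_eq_algebraMap_eval (A := ℂ) z.re p).symm

theorem Polynomial.exists_X_sub_C_mul_dvd_of_forall_aeval_eq_zero_im {p : ℝ[X]}
    (hp : 2 ≤ p.natDegree) (hreal : ∀ z : ℂ, aeval z p = 0 → z.im = 0) :
    ∃ r r', (X - C r) * (X - C r') ∣ p := by
  obtain ⟨r, hr⟩ := exists_isRoot_of_forall_aeval_eq_zero_im (by omega) hreal
  obtain ⟨q, rfl⟩ := dvd_iff_isRoot.2 hr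
  have hq0 : q ≠ 0 := by rintro rfl; simp at hp
  rw [natDegree_mul (X_sub_C_ne_zero r) hq0, natDegree_X_sub_C] at hp
  obtain ⟨r', hr'⟩ := exists_isRoot_of_forall_aeval_eq_zero_im (p := q) (by omega)
    fun z hz => hreal z (by simp [hz])
  exact ⟨r, r', mul_dvd_mul_left _ (dvd_iff_isRoot.2 hr')⟩

theorem nonneg_on_Icc_of_mul_nonneg {a b : ℝ} (hab : a < b) {M q : ℝ[X]} (hM : M ≠ 0)
    (hMnn : ∀ t ∈ Icc a b, 0 ≤ M.eval t) (hMq : ∀ t ∈ Icc a b, 0 ≤ (M * q).eval t) :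
    ∀ t ∈ Icc a b, 0 ≤ q.eval t := by
  have hdense : Dense {t | M.eval t ≠ 0} := by
    convert (M.roots.toFinset.finite_toSet.countable).dense_compl ℝ using 1
    ext t
    simp [hM]
  have hsub : Ioo a b ∩ {t | M.eval t ≠ 0} ⊆ {t | 0 ≤ q.eval t} := fun t ⟨ht, hMt⟩ => by
    have h := hMq t (Ioo_subset_Icc_self ht)
    rw [eval_mul] at h
    exact nonneg_of_mul_nonneg_right h ((hMnn t (Ioo_subset_Icc_self ht)).lt_of_ne' hMt)
  intro t ht
  rw [← closure_Ioo hab.ne] at ht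
  exact closure_minimal hsub (isClosed_le continuous_const q.continuous)
    (closure_minimal (hdense.open_subset_closure_inter isOpen_Ioo) isClosed_closure ht)

theorem exists_dvd_inQuadModule_of_nonneg {a b : ℝ} (hab : a < b) {p : ℝ[X]}
    (hp : 2 ≤ p.natDegree) (hnn : ∀ t ∈ Icc a b, 0 ≤ p.eval t) :
    ∃ M, M ∣ p ∧ M.natDegree = 2 ∧ InQuadModule a b 2 M := by
  have hp0 : p ≠ 0 := by rintro rfl; simp at hp
  by_cases hint : ∃ r ∈ Ioo a b, p.IsRoot r
  · obtain ⟨r, hr, hroot⟩ := hint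
    have hmin : IsLocalMin (fun t => p.eval t) r := by
      filter_upwards [Icc_mem_nhds hr.1 hr.2] with t ht
      rw [hroot.eq_zero]
      exact hnn t ht
    exact ⟨_, sq_X_sub_C_dvd_of_isLocalMin hp0 hroot hmin, by compute_degree!,
      .sq (natDegree_X_sub_C_le r)⟩
  by_cases hcx : ∃ z : ℂ, aeval z p = 0 ∧ z.im ≠ 0
  · obtain ⟨z, hz, him⟩ := hcx
    exact ⟨_, sq_add_sq_dvd_of_aeval_eq_zero hz him, by compute_degree!,
      .of_isSumSq ((IsSquare.isSumSq ⟨_, sq _⟩).add (isSumSq_C_s1 (sq_nonneg _)))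
        (by compute_degree)⟩
  push Not at hint hcx
  obtain ⟨r, r', hdvd⟩ := exists_X_sub_C_mul_dvd_of_forall_aeval_eq_zero_im hp hcx
  obtain ⟨ℓ, hℓ, hℓ1, hℓa, hℓb⟩ := exists_associated_X_sub_C_nonneg hab.le
    fun hr => hint r hr (dvd_iff_isRoot.1 ((dvd_mul_right _ _).trans hdvd))
  obtain ⟨ℓ', hℓ', hℓ'1, hℓ'a, hℓ'b⟩ := exists_associated_X_sub_C_nonneg hab.le
    fun hr => hint r' hr (dvd_iff_isRoot.1 ((dvd_mul_left _ _).trans hdvd))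
  have hassoc := hℓ.mul_mul hℓ'
  refine ⟨ℓ * ℓ', hassoc.dvd.trans hdvd, ?_,
    .mul_of_natDegree_le_one hab hℓ1 hℓa hℓb hℓ'1 hℓ'a hℓ'b⟩
  rw [natDegree_eq_of_degree_eq (degree_eq_degree_of_associated hassoc),
    natDegree_mul (X_sub_C_ne_zero r) (X_sub_C_ne_zero r'), natDegree_X_sub_C, natDegree_X_sub_C]

theorem inQuadModule_natDegree_of_nonneg {a b : ℝ} (hab : a < b) {p : ℝ[X]}
    (heven : Even p.natDegree) (hnn : ∀ t ∈ Icc a b, 0 ≤ p.eval t) :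
    InQuadModule a b p.natDegree p := by
  induction hn : p.natDegree using Nat.strong_induction_on generalizing p with
  | _ n ih =>
  rcases Nat.eq_zero_or_pos n with rfl | hpos
  · have hc := hnn a ⟨le_rfl, hab.le⟩
    rw [eq_C_of_natDegree_eq_zero hn] at hc ⊢
    rw [eval_C] at hc
    exact .of_isSumSq (isSumSq_C_s1 hc) (natDegree_C _).le
  obtain ⟨M, ⟨q, rfl⟩, hM2, hM⟩ := exists_dvd_inQuadModule_of_nonneg hab (by
    obtain ⟨k, hk⟩ := heven; omega) hnn
  have hM0 : M ≠ 0 := by rintro rfl; simp at hM2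
  have hq0 : q ≠ 0 := by rintro rfl; simp at hn; omega
  have hdeg : n = 2 + q.natDegree := by rw [← hn, natDegree_mul hM0 hq0, hM2]
  have hq := ih q.natDegree (by omega) (by obtain ⟨k, hk⟩ := heven; exact ⟨k - 1, by omega⟩)
    (nonneg_on_Icc_of_mul_nonneg hab hM0 (fun t => hM.eval_nonneg) hnn) rfl
  rw [hdeg]
  exact hM.mul hq

theorem stmt1 (a b : ℝ) (hab : a < b) (p : Polynomial ℝ) (heven : Even p.natDegree) :
    (∀ t ∈ Set.Icc a b, 0 ≤ p.eval t) ↔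
      ∃ f g : Polynomial ℝ, IsSOS f ∧ IsSOS g ∧
        f.natDegree ≤ p.natDegree ∧ g.natDegree ≤ p.natDegree - 2 ∧
        ∀ t : ℝ, p.eval t = f.eval t + (t - a) * (b - t) * g.eval t := by
  refine ⟨fun hnn => ?_, fun ⟨f, g, hf, hg, _, _, hfg⟩ t ht => ?_⟩
  · obtain ⟨f, g, hf, hg, hfn, hgn, hfg⟩ := inQuadModule_natDegree_of_nonneg hab heven hnn
    refine ⟨f, g, isSOS_iff_isSumSq.2 hf, isSOS_iff_isSumSq.2 hg, hfn, ?_, fun t => by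
      rw [hfg, eval_add, eval_mul, eval_intervalWeight]⟩
    rcases eq_or_ne g 0 with rfl | hg0
    · simp
    rw [natDegree_mul (intervalWeight_ne_zero a b) hg0, natDegree_intervalWeight] at hgn
    omega
  · rw [hfg t]
    exact add_nonneg ((isSOS_iff_isSumSq.1 hf).eval_nonneg t) (mul_nonneg
      (mul_nonneg (sub_nonneg.2 ht.1) (sub_nonneg.2 ht.2)) ((isSOS_iff_isSumSq.1 hg).eval_nonneg t))
end

section
/- Let p be a polynomial strictly positive on [a,b] with a < b. Then there exists an integer q such that p(x) = Σ_{i+j ≤ q} c_{ij} (b−x)^i (x−a)^j with all coefficients c_{ij} ≥ 0. -/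
open Polynomial Finset

/-!
The substitution `x = (a t + b) / (t + 1)` maps `t ∈ [0, ∞]` onto `[a, b]` and turns `p` into a
polynomial `g` of degree at most `d = deg p` whose homogenization `H(u, v) = ∑ g_k u^k v^(d-k)`
satisfies `H(b - x, x - a) = (b - a)^d p(x)`. Hence `H` is positive on the simplex
`u, v ≥ 0, u + v = 1`, and by Pólya's theorem `(u + v)^N H` has nonnegative coefficients for some
`N`; evaluated at `u = b - x, v = x - a` this is the required representation.

For Pólya's theorem, write `n = N + d`. Up to the positive factor `C(n, m) / n^(d)`, the `m`-th
coefficient of `(u + v)^N H` is `∑ g_k m^(k) (n - m)^(d - k)` (falling factorials), that is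
`n^d F_{1/n}(m/n)` for a deformation `F_h(s)` of `H(s, 1 - s)` which is jointly continuous in
`(h, s)`. Since `F_0 > 0` on the compact interval `[0, 1]`, also `F_h > 0` there for small `h`.
-/

namespace Polynomial

variable {R : Type*} [CommSemiring R]

lemma eval_homogenize_eq_sum (p : R[X]) (n : ℕ) (x : Fin 2 → R) :
    MvPolynomial.eval x (p.homogenize n) =
      ∑ kl ∈ antidiagonal n, p.coeff kl.1 * x 0 ^ kl.1 * x 1 ^ kl.2 := by
  simp only [homogenize, MvPolynomial.eval_sum, MvPolynomial.eval_monomial]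
  refine sum_congr rfl fun kl _ => ?_
  simp [Finsupp.prod_fintype, Fin.prod_univ_two, mul_assoc]

lemma homogenize_X_add_one_pow (N : ℕ) :
    ((X + 1 : R[X]) ^ N).homogenize N = (MvPolynomial.X 0 + MvPolynomial.X 1) ^ N := by
  refine homogenize_eq_of_isHomogeneous ?_ (by simp)
  simpa using ((MvPolynomial.isHomogeneous_X R 0).add (MvPolynomial.isHomogeneous_X R 1)).pow N

end Polynomial

section Goursat

variable {R : Type*} [CommSemiring R]

/-- `(t + 1)^d p((a t + b) / (t + 1))`, written without division. -/
noncomputable def goursatTransform (a b : R) (d : ℕ) (p : R[X]) : R[X] :=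
  ∑ i ∈ range (d + 1), C (p.coeff i) * (C a * X + C b) ^ i * (X + 1) ^ (d - i)

lemma natDegree_goursatTransform_le (a b : R) (d : ℕ) (p : R[X]) :
    (goursatTransform a b d p).natDegree ≤ d := by
  refine natDegree_sum_le_of_forall_le _ _ fun i hi => ?_
  have hi : i ≤ d := mem_range_succ_iff.1 hi
  compute_degree
  omega

lemma eval_homogenize_goursatTransform (a b : R) (d : ℕ) (p : R[X]) (x : Fin 2 → R) :
    MvPolynomial.eval x ((goursatTransform a b d p).homogenize d) =
      MvPolynomial.eval ![a * x 0 + b * x 1, x 0 + x 1] (p.homogenize d) := by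
  open MvPolynomial in
  have hform : IsHomogeneous (∑ i ∈ range (d + 1), MvPolynomial.C (p.coeff i) *
      (MvPolynomial.C a * X 0 + MvPolynomial.C b * X 1) ^ i *
        (X 0 + X 1 : MvPolynomial (Fin 2) R) ^ (d - i)) d := by
    refine IsHomogeneous.sum _ _ _ fun i hi => ?_
    have hlin := (isHomogeneous_C_mul_X a 0).add (isHomogeneous_C_mul_X b (1 : Fin 2))
    have hsum := (isHomogeneous_X R 0).add (isHomogeneous_X R (1 : Fin 2))
    simpa [Nat.add_sub_cancel' (mem_range_succ_iff.1 hi), mul_assoc] using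
      ((hlin.pow i).mul (hsum.pow (d - i))).C_mul (p.coeff i)
  rw [homogenize_eq_of_isHomogeneous hform (by simp [goursatTransform]),
    eval_homogenize_eq_sum, Nat.sum_antidiagonal_eq_sum_range_succ_mk]
  simp

lemma sum_antidiagonal_coeff_X_add_one_pow_mul_goursatTransform {K : Type*} [Field K] {a b : K}
    (hab : a ≠ b) {p : K[X]} {d : ℕ} (hp : p.natDegree ≤ d) (N : ℕ) (x : K) :
    ∑ kl ∈ antidiagonal (N + d), ((X + 1) ^ N * goursatTransform a b d p).coeff kl.1 *
      (b - x) ^ kl.1 * (x - a) ^ kl.2 = (b - a) ^ (N + d) * p.eval x := by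
  have hba : b - a ≠ 0 := sub_ne_zero.2 hab.symm
  have key := congrArg (MvPolynomial.eval ![b - x, x - a])
    (homogenize_mul ((X + 1 : K[X]) ^ N) _ (m := N) (by compute_degree)
      (natDegree_goursatTransform_le a b d p))
  rw [eval_homogenize_eq_sum, map_mul, homogenize_X_add_one_pow,
    eval_homogenize_goursatTransform, eval_homogenize hp _ (by simpa using hba)] at key
  simp only [map_pow, map_add, MvPolynomial.eval_X, Matrix.cons_val_zero, Matrix.cons_val_one,
    Matrix.cons_val_fin_one] at key
  rw [key, show a * (b - x) + b * (x - a) = (b - a) * x by ring,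
    show b - x + (x - a) = b - a by ring, mul_div_cancel_left₀ x hba]
  ring

end Goursat

section Polya

lemma Nat.choose_mul_descFactorial_add_eq (N d i k : ℕ) (hk : k ≤ d) :
    N.choose i * (N + d).descFactorial d =
      (N + d).choose (i + k) * (i + k).descFactorial k * (N + d - (i + k)).descFactorial (d - k) := by
  rcases le_or_gt i N with hi | hi
  · obtain ⟨j, rfl⟩ := Nat.exists_eq_add_of_le hi
    obtain ⟨e, rfl⟩ := Nat.exists_eq_add_of_le hk
    have hn : i + j + (k + e) - (i + k) = j + e := by omega
    rw [hn, Nat.add_sub_cancel_left]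
    have h1 := Nat.choose_mul_factorial_mul_factorial (Nat.le_add_right i j)
    have h2 := Nat.factorial_mul_descFactorial (Nat.le_add_left (k + e) (i + j))
    have h3 := Nat.factorial_mul_descFactorial (Nat.le_add_left k i)
    have h4 := Nat.factorial_mul_descFactorial (Nat.le_add_left e j)
    have h5 := Nat.choose_mul_factorial_mul_factorial (by omega : i + k ≤ i + j + (k + e))
    simp only [Nat.add_sub_cancel_left, Nat.add_sub_cancel, hn] at h1 h2 h3 h4 h5
    apply Nat.eq_of_mul_eq_mul_right (Nat.mul_pos i.factorial_pos j.factorial_pos)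
    zify at *
    linear_combination ((i + j + (k + e)).descFactorial (k + e) : ℤ) * h1 + h2
      - ((i + j + (k + e)).choose (i + k) * (j + e).descFactorial e * j.factorial : ℤ) * h3
      - ((i + j + (k + e)).choose (i + k) * (i + k).factorial : ℤ) * h4 - h5
  · rw [Nat.choose_eq_zero_of_lt hi, zero_mul]
    rcases lt_or_ge (N + d) (i + k) with h | h
    · simp [Nat.choose_eq_zero_of_lt h]
    · simp [Nat.descFactorial_eq_zero_iff_lt.2 (by omega : N + d - (i + k) < d - k)]

variable {R : Type*} [CommRing R]

lemma coeff_X_add_one_pow_mul_mul_descFactorial {g : R[X]} {d : ℕ} (hg : g.natDegree ≤ d)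
    (N m : ℕ) :
    ((X + 1) ^ N * g).coeff m * (N + d).descFactorial d = (N + d).choose m *
      ∑ k ∈ range (d + 1), g.coeff k * m.descFactorial k * (N + d - m).descFactorial (d - k) := by
  conv_lhs => rw [g.as_sum_range' (d + 1) (Nat.lt_succ_of_le hg)]
  simp only [mul_sum, sum_mul, finsetSum_coeff]
  refine sum_congr rfl fun k hk => ?_
  rw [← C_mul_X_pow_eq_monomial, mul_left_comm, coeff_C_mul, coeff_mul_X_pow',
    coeff_X_add_one_pow]
  split_ifs with hkm
  · obtain ⟨i, rfl⟩ := Nat.exists_eq_add_of_le' hkm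
    rw [Nat.add_sub_cancel]
    have hcast := congrArg (Nat.cast : ℕ → R)
      (Nat.choose_mul_descFactorial_add_eq N d i k (mem_range_succ_iff.1 hk))
    push_cast at hcast
    linear_combination g.coeff k * hcast
  · simp [Nat.descFactorial_eq_zero_iff_lt.2 (not_le.1 hkm)]

lemma prod_range_mul_sub_natCast_mul (x h : R) (k : ℕ) :
    ∏ i ∈ range k, (x * h - i * h) = h ^ k * (descPochhammer R k).eval x := by
  rw [descPochhammer_eval_eq_prod_range, show h ^ k = ∏ _i ∈ range k, h by simp,
    ← prod_mul_distrib]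
  exact prod_congr rfl fun i _ => by ring

/-- `∑ g_k s^k (1 - s)^(d - k)` with the powers replaced by falling factorials of step `h`. -/
noncomputable def polyaForm (g : ℝ[X]) (d : ℕ) (h s : ℝ) : ℝ :=
  ∑ k ∈ range (d + 1),
    g.coeff k * (∏ i ∈ range k, (s - i * h)) * ∏ i ∈ range (d - k), (1 - s - i * h)

lemma continuous_polyaForm (g : ℝ[X]) (d : ℕ) :
    Continuous fun z : ℝ × ℝ => polyaForm g d z.1 z.2 := by
  unfold polyaForm
  fun_prop

lemma polyaForm_zero (g : ℝ[X]) (d : ℕ) (s : ℝ) :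
    polyaForm g d 0 s = MvPolynomial.eval ![s, 1 - s] (g.homogenize d) := by
  simp [polyaForm, eval_homogenize_eq_sum, Nat.sum_antidiagonal_eq_sum_range_succ_mk, mul_assoc]

lemma natCast_pow_mul_polyaForm {n m : ℕ} (g : ℝ[X]) (d : ℕ) (hn : n ≠ 0) (hm : m ≤ n) :
    (n : ℝ) ^ d * polyaForm g d (1 / n) (m / n) =
      ∑ k ∈ range (d + 1), g.coeff k * m.descFactorial k * (n - m).descFactorial (d - k) := by
  have hsub : 1 - (m : ℝ) / n = ((n - m : ℕ) : ℝ) * (1 / n) := by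
    rw [Nat.cast_sub hm]; field_simp
  rw [polyaForm, mul_sum]
  refine sum_congr rfl fun k hk => ?_
  rw [hsub, div_eq_mul_one_div (m : ℝ), prod_range_mul_sub_natCast_mul,
    prod_range_mul_sub_natCast_mul, descPochhammer_eval_eq_descFactorial,
    descPochhammer_eval_eq_descFactorial]
  have hn' : (n : ℝ) ≠ 0 := Nat.cast_ne_zero.2 hn
  rw [← Nat.add_sub_cancel' (mem_range_succ_iff.1 hk), pow_add, Nat.add_sub_cancel_left,
    one_div_pow, one_div_pow]
  field_simp

theorem exists_coeff_X_add_one_pow_mul_nonneg {g : ℝ[X]} {d : ℕ} (hg : g.natDegree ≤ d)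
    (hpos : ∀ s ∈ Set.Icc (0 : ℝ) 1, 0 < MvPolynomial.eval ![s, 1 - s] (g.homogenize d)) :
    ∃ N, ∀ m, 0 ≤ ((X + 1) ^ N * g).coeff m := by
  have hnear : ∀ᶠ h in nhds (0 : ℝ), ∀ s ∈ Set.Icc (0 : ℝ) 1, 0 < polyaForm g d h s :=
    isCompact_Icc.eventually_forall_of_forall_eventually fun s hs =>
      (continuous_polyaForm g d).continuousAt.eventually
        (lt_mem_nhds (by simpa [polyaForm_zero] using hpos s hs))
  obtain ⟨N, hN⟩ := (tendsto_one_div_atTop_nhds_zero_nat.eventually hnear).exists_forall_of_atTop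
  refine ⟨N + 1, fun m => ?_⟩
  have hform : 0 ≤ ((N + 1 + d).choose m : ℝ) * ∑ k ∈ range (d + 1),
      g.coeff k * m.descFactorial k * (N + 1 + d - m).descFactorial (d - k) := by
    rcases le_or_gt m (N + 1 + d) with hm | hm
    · rw [← natCast_pow_mul_polyaForm g d (by omega) hm]
      have := hN (N + 1 + d) (by omega) (m / (N + 1 + d : ℕ))
        ⟨by positivity, div_le_one_of_le₀ (by exact_mod_cast hm) (by positivity)⟩
      positivity
    · simp [Nat.choose_eq_zero_of_lt hm]
  rw [← coeff_X_add_one_pow_mul_mul_descFactorial hg] at hform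
  exact nonneg_of_mul_nonneg_left hform (by exact_mod_cast Nat.descFactorial_pos.2 (by omega))

end Polya

lemma sum_range_sum_range_ite_add_eq {M : Type*} [AddCommMonoid M] (q : ℕ) (f : ℕ → ℕ → M) :
    ∑ i ∈ range (q + 1), ∑ j ∈ range (q + 1 - i), (if i + j = q then f i j else 0) =
      ∑ ij ∈ antidiagonal q, f ij.1 ij.2 := by
  rw [Nat.sum_antidiagonal_eq_sum_range_succ f q]
  refine sum_congr rfl fun i hi => ?_
  have hi : i ≤ q := mem_range_succ_iff.1 hi
  rw [sum_eq_single_of_mem (q - i) (mem_range.2 (by omega)) fun j _ hj => if_neg (by omega),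
    if_pos (by omega)]

theorem stmt14 (a b : ℝ) (hab : a < b) (p : Polynomial ℝ)
    (hpos : ∀ x ∈ Set.Icc a b, 0 < p.eval x) :
    ∃ (q : ℕ) (c : ℕ → ℕ → ℝ), (∀ i j, 0 ≤ c i j) ∧
      ∀ x : ℝ, p.eval x =
        ∑ i ∈ range (q + 1), ∑ j ∈ range (q + 1 - i),
          c i j * (b - x) ^ i * (x - a) ^ j := by
  set d := p.natDegree
  have hsimplex : ∀ s ∈ Set.Icc (0 : ℝ) 1,
      0 < MvPolynomial.eval ![s, 1 - s] ((goursatTransform a b d p).homogenize d) := by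
    rintro s ⟨hs0, hs1⟩
    rw [eval_homogenize_goursatTransform, eval_homogenize le_rfl _ (by simp)]
    simpa using hpos _ ⟨by nlinarith, by nlinarith⟩
  obtain ⟨N, hN⟩ :=
    exists_coeff_X_add_one_pow_mul_nonneg (natDegree_goursatTransform_le a b d p) hsimplex
  have hL : 0 < (b - a) ^ (N + d) := pow_pos (sub_pos.2 hab) _
  refine ⟨N + d, fun i j => if i + j = N + d then
    ((X + 1) ^ N * goursatTransform a b d p).coeff i / (b - a) ^ (N + d) else 0, ?_, fun x => ?_⟩
  · intro i j
    dsimp only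
    split_ifs
    exacts [div_nonneg (hN i) hL.le, le_rfl]
  · simp only [ite_mul, zero_mul]
    refine Eq.trans ?_ (sum_range_sum_range_ite_add_eq (N + d) fun i j =>
      ((X + 1) ^ N * goursatTransform a b d p).coeff i / (b - a) ^ (N + d) *
        (b - x) ^ i * (x - a) ^ j).symm
    simp only [div_mul_eq_mul_div, ← sum_div,
      sum_antidiagonal_coeff_X_add_one_pow_mul_goursatTransform hab.ne (d := d) le_rfl]
    field_simp
end

section
/- For the PDHG iteration on a convex problem min_x f(x) + g(Lx) with L linear, if a saddle point of the Lagrangian exists and the step sizes α, β > 0 satisfy αβ‖L‖² < 1, then the primal-dual hybrid gradient iterates x^{k+1} = prox_{αf}(x^k − αLᵀλ^k), λ^{k+1} = prox_{βg*}(λ^k + βL(2x^{k+1} − x^k)) converge to a saddle point. -/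
open scoped Topology

/-- Euclidean space shortcut. -/
abbrev Euc (n : ℕ) := EuclideanSpace ℝ (Fin n)

/-- `p` is the proximal point of `h` with parameter `α` at `z`. -/
def IsProxPt {X : Type*} [NormedAddCommGroup X] (h : X → EReal) (α : ℝ) (z p : X) : Prop :=
  ∀ x : X, h p + (((‖p - z‖ ^ 2) / (2 * α) : ℝ) : EReal)
    ≤ h x + (((‖x - z‖ ^ 2) / (2 * α) : ℝ) : EReal)

/-- Fenchel conjugate of `g`. -/
noncomputable def fenchel {m : ℕ} (g : Euc m → EReal) (lam : Euc m) : EReal :=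
  ⨆ y : Euc m, ((inner ℝ lam y : ℝ) : EReal) - g y

/-! The iteration is the proximal-point method for the saddle-point problem in the metric
`‖(u, v)‖²_M = ‖u‖²/α + ‖v‖²/β - 2⟪L u, v⟫`, which is positive definite because
`α β ‖L‖² < 1`. Adding the variational inequalities of the two proximal steps to the saddle
inequalities shows that the `M`-distance to every saddle point decreases by at least the squared
`M`-length of the step. So the iterates are bounded and their steps vanish; any cluster point is
then a fixed point of the iteration, hence a saddle point, and the decreasing `M`-distance to it
tends to zero along the whole sequence. The conjugate `g*` is proper because the proper closed
convex `g` has an affine minorant (Hahn–Banach). -/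

open Filter Set

def epigraph {X : Type*} (h : X → EReal) : Set (X × ℝ) := {p | h p.1 ≤ p.2}

structure IsProperConvex {X : Type*} [AddCommGroup X] [Module ℝ X] (h : X → EReal) : Prop where
  exists_ne_top : ∃ x, h x ≠ ⊤
  ne_bot : ∀ x, h x ≠ ⊥
  convex_epigraph : Convex ℝ (epigraph h)

theorem apply_add_smul_sub_le_of_convex_epigraph {X : Type*} [AddCommGroup X] [Module ℝ X]
    {h : X → EReal} (hh : Convex ℝ (epigraph h)) {p x : X} {a b : ℝ} (ha : h p = a)
    (hb : h x = b) {t : ℝ} (ht : t ∈ Icc (0 : ℝ) 1) :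
    h (p + t • (x - p)) ≤ ((a + t * (b - a) : ℝ) : EReal) := by
  have := hh.add_smul_sub_mem (x := (p, a)) (y := (x, b)) ha.le hb.le ht
  simpa [epigraph] using this

namespace IsProxPt

section NormedAddCommGroup

variable {X : Type*} [NormedAddCommGroup X] {h : X → EReal} {α : ℝ} {z p : X}

theorem ne_top (hp : IsProxPt h α z p) {u : X} (hu : h u ≠ ⊤) : h p ≠ ⊤ := by
  intro htop
  have := (hp u).trans_lt (EReal.add_lt_top hu (EReal.coe_ne_top _))
  simp [htop] at this

theorem toReal_le (hbot : ∀ x, h x ≠ ⊥) (hp : IsProxPt h α z p) {u : X} (hu : h u ≠ ⊤) :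
    (h p).toReal + ‖p - z‖ ^ 2 / (2 * α) ≤ (h u).toReal + ‖u - z‖ ^ 2 / (2 * α) := by
  have key := hp u
  rw [← EReal.coe_toReal hu (hbot u), ← EReal.coe_toReal (hp.ne_top hu) (hbot p)] at key
  exact_mod_cast key

theorem of_tendsto (hclosed : IsClosed (epigraph h)) (hbot : ∀ x, h x ≠ ⊥)
    {z p : ℕ → X} {z' p' : X} (hz : Tendsto z atTop (𝓝 z')) (hp : Tendsto p atTop (𝓝 p'))
    (hprox : ∀ j, IsProxPt h α (z j) (p j)) : IsProxPt h α z' p' := by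
  intro u
  rcases eq_or_ne (h u) ⊤ with hu | hu
  · simp [hu]
  set r : X → X → ℝ := fun z p => (h u).toReal + ‖u - z‖ ^ 2 / (2 * α) - ‖p - z‖ ^ 2 / (2 * α)
  have hmem : ∀ j, (p j, r (z j) (p j)) ∈ epigraph h := fun j => by
    have := (hprox j).toReal_le hbot hu
    change h (p j) ≤ ((r (z j) (p j) : ℝ) : EReal)
    rw [← EReal.coe_toReal ((hprox j).ne_top hu) (hbot _), EReal.coe_le_coe_iff]
    linarith
  have hr : Tendsto (fun j => r (z j) (p j)) atTop (𝓝 (r z' p')) :=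
    (tendsto_const_nhds.add (((tendsto_const_nhds.sub hz).norm.pow 2).div_const _)).sub
      (((hp.sub hz).norm.pow 2).div_const _)
  have hlim : h p' ≤ ((r z' p' : ℝ) : EReal) :=
    hclosed.mem_of_tendsto (hp.prodMk_nhds hr) (Eventually.of_forall hmem)
  calc h p' + ((‖p' - z'‖ ^ 2 / (2 * α) : ℝ) : EReal)
      ≤ ((r z' p' : ℝ) : EReal) + ((‖p' - z'‖ ^ 2 / (2 * α) : ℝ) : EReal) := by gcongr
    _ = h u + ((‖u - z'‖ ^ 2 / (2 * α) : ℝ) : EReal) := by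
      rw [← EReal.coe_toReal hu (hbot u)]
      norm_cast
      ring

end NormedAddCommGroup

variable {X : Type*} [NormedAddCommGroup X] [InnerProductSpace ℝ X] {h : X → EReal} {α : ℝ}
  {z p : X}

theorem inner_le (hα : 0 < α) (hh : Convex ℝ (epigraph h)) (hbot : ∀ x, h x ≠ ⊥)
    (hp : IsProxPt h α z p) {x : X} (hx : h x ≠ ⊤) :
    (h p).toReal + inner ℝ (z - p) (x - p) / α ≤ (h x).toReal := by
  set a := (h p).toReal
  set b := (h x).toReal
  set c := inner ℝ (z - p) (x - p)
  set q := ‖x - p‖ ^ 2 / (2 * α)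
  -- compare `p` with the points `p + t • (x - p)` of the segment and let `t → 0`
  have key : ∀ t ∈ Ioc (0 : ℝ) 1, a + c / α - b ≤ t * q := by
    rintro t ⟨ht0, ht1⟩
    have hconv := apply_add_smul_sub_le_of_convex_epigraph hh
      (EReal.coe_toReal (hp.ne_top hx) (hbot p)).symm (EReal.coe_toReal hx (hbot x)).symm
      ⟨ht0.le, ht1⟩
    have hprox := hp.toReal_le hbot (ne_top_of_le_ne_top (EReal.coe_ne_top _) hconv)
    have hconv' := EReal.toReal_le_toReal hconv (hbot _) (EReal.coe_ne_top _)
    rw [EReal.toReal_coe] at hconv'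
    have hexpand : ‖p + t • (x - p) - z‖ ^ 2 / (2 * α)
        = ‖p - z‖ ^ 2 / (2 * α) - t * (c / α) + t * (t * q) := by
      rw [show p + t • (x - p) - z = (p - z) + t • (x - p) by abel, norm_add_sq_real,
        inner_smul_right, norm_smul, mul_pow, Real.norm_eq_abs, sq_abs,
        show p - z = -(z - p) by abel, inner_neg_left, norm_neg]
      simp only [c, q]
      field_simp
      ring
    rw [hexpand] at hprox
    have : t * (a + c / α - b) ≤ t * (t * q) := by nlinarith
    exact le_of_mul_le_mul_left this ht0
  have hlim : Tendsto (fun t : ℝ => t * q) (𝓝[>] 0) (𝓝 0) := by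
    have := (tendsto_id (x := 𝓝 (0 : ℝ))).mul_const q
    rw [zero_mul] at this
    exact this.mono_left nhdsWithin_le_nhds
  have := ge_of_tendsto hlim (eventually_of_mem (Ioc_mem_nhdsGT one_pos) key)
  linarith

end IsProxPt

section Fenchel

variable {m : ℕ} {g : Euc m → EReal}

theorem fenchel_ne_bot (hg : ∃ y, g y ≠ ⊤) (hbot : ∀ y, g y ≠ ⊥) (v : Euc m) :
    fenchel g v ≠ ⊥ := by
  obtain ⟨y, hy⟩ := hg
  refine ne_bot_of_le_ne_bot ?_ (le_iSup (fun y => ((inner ℝ v y : ℝ) : EReal) - g y) y)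
  rw [← EReal.coe_toReal hy (hbot y)]
  exact EReal.coe_ne_bot _

theorem fenchel_le_of_forall_le {v : Euc m} {b : ℝ}
    (hmin : ∀ y, ((inner ℝ v y + b : ℝ) : EReal) ≤ g y) :
    fenchel g v ≤ ((-b : ℝ) : EReal) := by
  refine iSup_le fun y => ?_
  have hy := hmin y
  generalize g y = a at hy ⊢
  induction a using EReal.rec with
  | bot => simp at hy
  | coe r =>
    norm_cast at hy ⊢
    linarith
  | top => simp [EReal.sub_top]

/-- Separate a point lying strictly below the graph from the epigraph and read the minorant off
the separating functional. -/
theorem exists_forall_inner_add_le (hg : ∃ y, g y ≠ ⊤) (hbot : ∀ y, g y ≠ ⊥)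
    (hcvx : Convex ℝ (epigraph g)) (hclosed : IsClosed (epigraph g)) :
    ∃ (v : Euc m) (b : ℝ), ∀ y, ((inner ℝ v y + b : ℝ) : EReal) ≤ g y := by
  obtain ⟨y₀, hy₀⟩ := hg
  have hmem : ∀ y, g y ≠ ⊤ → (y, (g y).toReal) ∈ epigraph g := fun y hy =>
    (EReal.coe_toReal hy (hbot y)).ge
  have hnot : (y₀, (g y₀).toReal - 1) ∉ epigraph g := fun h => by
    have := EReal.toReal_le_toReal (h : g y₀ ≤ (((g y₀).toReal - 1 : ℝ) : EReal)) (hbot y₀)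
      (EReal.coe_ne_top _)
    rw [EReal.toReal_coe] at this
    linarith
  obtain ⟨φ, u, hφ₀, hφ⟩ := geometric_hahn_banach_point_closed hcvx hclosed hnot
  set ℓ := φ.comp (ContinuousLinearMap.inl ℝ (Euc m) ℝ)
  set s := φ (0, 1)
  have hsplit : ∀ y t, φ (y, t) = ℓ y + t * s := fun y t => by
    rw [show (y, t) = (y, (0 : ℝ)) + t • ((0 : Euc m), (1 : ℝ)) by simp, map_add, map_smul,
      smul_eq_mul]
    rfl
  have hs : 0 < s := by
    have := hφ _ (hmem y₀ hy₀)
    rw [hsplit] at this hφ₀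
    linarith
  refine ⟨-(1 / s) • (InnerProductSpace.toDual ℝ (Euc m)).symm ℓ, u / s, fun y => ?_⟩
  rcases eq_or_ne (g y) ⊤ with hy | hy
  · simp [hy]
  rw [← EReal.coe_toReal hy (hbot y), EReal.coe_le_coe_iff, real_inner_smul_left,
    InnerProductSpace.toDual_symm_apply]
  have := hφ _ (hmem y hy)
  rw [hsplit] at this
  rw [show -(1 / s) * ℓ y + u / s = (u - ℓ y) / s by ring, div_le_iff₀ hs]
  linarith

theorem epigraph_fenchel (hbot : ∀ y, g y ≠ ⊥) :
    epigraph (fenchel g) =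
      ⋂ y ∈ {y | g y ≠ ⊤}, {q : Euc m × ℝ | inner ℝ y q.1 - q.2 ≤ (g y).toReal} := by
  ext q
  simp only [epigraph, fenchel, iSup_le_iff, mem_iInter, mem_ofPred_eq]
  refine forall_congr' fun y => ?_
  rcases eq_or_ne (g y) ⊤ with hy | hy
  · simp [hy, EReal.sub_top]
  obtain ⟨r, hr⟩ : ∃ r : ℝ, g y = r := ⟨_, (EReal.coe_toReal hy (hbot y)).symm⟩
  simp only [hr, ne_eq, EReal.coe_ne_top, not_false_eq_true, forall_const, EReal.toReal_coe]
  norm_cast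
  constructor <;> intro h <;> linarith [real_inner_comm q.1 y]

theorem convex_epigraph_fenchel (hbot : ∀ y, g y ≠ ⊥) : Convex ℝ (epigraph (fenchel g)) := by
  rw [epigraph_fenchel hbot]
  exact convex_iInter₂ fun y _ =>
    convex_halfSpace_le (((innerSL ℝ y).comp (ContinuousLinearMap.fst ℝ (Euc m) ℝ)
      - ContinuousLinearMap.snd ℝ (Euc m) ℝ).isLinear) _

theorem isClosed_epigraph_fenchel (hbot : ∀ y, g y ≠ ⊥) : IsClosed (epigraph (fenchel g)) := by
  rw [epigraph_fenchel hbot]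
  exact isClosed_biInter fun y _ =>
    isClosed_le ((continuous_const.inner continuous_fst).sub continuous_snd) continuous_const

theorem IsProperConvex.fenchel (hg : IsProperConvex g) (hclosed : IsClosed (epigraph g)) :
    IsProperConvex (fenchel g) := by
  obtain ⟨v, b, hmin⟩ := exists_forall_inner_add_le hg.exists_ne_top hg.ne_bot hg.convex_epigraph
    hclosed
  exact ⟨⟨v, ne_top_of_le_ne_top (EReal.coe_ne_top _) (fenchel_le_of_forall_le hmin)⟩,
    fenchel_ne_bot hg.exists_ne_top hg.ne_bot, convex_epigraph_fenchel hg.ne_bot⟩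

end Fenchel

section Lagrangian

variable {E F : Type*}

theorem isSaddlePointOn_univ_iff {β : Type*} [Preorder β] {Λ : E → F → β} {x : E} {y : F} :
    IsSaddlePointOn univ univ Λ x y ↔ ∀ x' y', Λ x y' ≤ Λ x y ∧ Λ x y ≤ Λ x' y :=
  ⟨fun h x' y' => ⟨h x trivial y' trivial, h x' trivial y trivial⟩,
    fun h x' _ y' _ => (h x' y').1.trans (h x' y').2⟩

noncomputable def lagrangian (φ : E → EReal) (ψ : F → EReal) (c : E → F → ℝ) (x : E) (y : F) :
    EReal :=
  φ x + (c x y : EReal) - ψ y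

variable {φ : E → EReal} {ψ : F → EReal} {c : E → F → ℝ} {x : E} {y : F}

theorem lagrangian_eq_coe {a b : ℝ} (hx : φ x = a) (hy : ψ y = b) :
    lagrangian φ ψ c x y = ((a + c x y - b : ℝ) : EReal) := by
  rw [lagrangian, hx, hy]
  norm_cast

theorem lagrangian_eq_bot {a : ℝ} (hx : φ x = a) (hy : ψ y = ⊤) : lagrangian φ ψ c x y = ⊥ := by
  rw [lagrangian, hx, hy, ← EReal.coe_add, EReal.sub_top]

theorem lagrangian_eq_top {b : ℝ} (hx : φ x = ⊤) (hy : ψ y = b) : lagrangian φ ψ c x y = ⊤ := by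
  rw [lagrangian, hx, hy, EReal.top_add_coe, EReal.top_sub_coe]

theorem lagrangian_ne_bot {b : ℝ} (hx : φ x ≠ ⊥) (hy : ψ y = b) : lagrangian φ ψ c x y ≠ ⊥ := by
  rw [lagrangian, hy, sub_eq_add_neg, ← EReal.coe_neg]
  exact EReal.add_ne_bot_iff.2 ⟨EReal.add_ne_bot_iff.2 ⟨hx, EReal.coe_ne_bot _⟩, EReal.coe_ne_bot _⟩

theorem IsSaddlePointOn.ne_top_of_lagrangian (hφ : ∀ x, φ x ≠ ⊥) (hψ : ∀ y, ψ y ≠ ⊥) {x₁ : E}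
    {y₁ : F} (hx₁ : φ x₁ ≠ ⊤) (hy₁ : ψ y₁ ≠ ⊤)
    (h : IsSaddlePointOn univ univ (lagrangian φ ψ c) x y) : φ x ≠ ⊤ ∧ ψ y ≠ ⊤ := by
  have hle := h x₁ trivial y₁ trivial
  have hy : ψ y ≠ ⊤ := fun hy =>
    lagrangian_ne_bot (hφ x) (EReal.coe_toReal hy₁ (hψ y₁)).symm
      (le_bot_iff.1 (hle.trans_eq (lagrangian_eq_bot (EReal.coe_toReal hx₁ (hφ x₁)).symm hy)))
  refine ⟨fun hx => ?_, hy⟩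
  rw [lagrangian_eq_top hx (EReal.coe_toReal hy₁ (hψ y₁)).symm,
    lagrangian_eq_coe (EReal.coe_toReal hx₁ (hφ x₁)).symm (EReal.coe_toReal hy (hψ y)).symm,
    top_le_iff] at hle
  exact EReal.coe_ne_top _ hle

theorem isSaddlePointOn_lagrangian_iff (hφ : ∀ x, φ x ≠ ⊥) (hψ : ∀ y, ψ y ≠ ⊥) (hx : φ x ≠ ⊤)
    (hy : ψ y ≠ ⊤) :
    IsSaddlePointOn univ univ (lagrangian φ ψ c) x y ↔ ∀ x', φ x' ≠ ⊤ → ∀ y', ψ y' ≠ ⊤ →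
      (φ x).toReal + c x y' - (ψ y').toReal ≤ (φ x').toReal + c x' y - (ψ y).toReal := by
  have hreal : ∀ {x' y'}, φ x' ≠ ⊤ → ψ y' ≠ ⊤ →
      lagrangian φ ψ c x' y' = (((φ x').toReal + c x' y' - (ψ y').toReal : ℝ) : EReal) :=
    fun hx' hy' => lagrangian_eq_coe (EReal.coe_toReal hx' (hφ _)).symm
      (EReal.coe_toReal hy' (hψ _)).symm
  constructor
  · intro h x' hx' y' hy'
    have := h x' trivial y' trivial
    rwa [hreal hx hy', hreal hx' hy, EReal.coe_le_coe_iff] at this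
  · intro h x' _ y' _
    rcases eq_or_ne (ψ y') ⊤ with hy' | hy'
    · exact (lagrangian_eq_bot (EReal.coe_toReal hx (hφ x)).symm hy').trans_le bot_le
    rcases eq_or_ne (φ x') ⊤ with hx' | hx'
    · exact le_top.trans_eq (lagrangian_eq_top hx' (EReal.coe_toReal hy (hψ y)).symm).symm
    rw [hreal hx hy', hreal hx' hy, EReal.coe_le_coe_iff]
    exact h x' hx' y' hy'

end Lagrangian

section Fejer

variable {E : Type*} [NormedAddCommGroup E] [ProperSpace E] {Q : E → ℝ} {δ : ℝ}

/-- Opial's lemma, with distances to `S` measured by `Q`. -/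
theorem exists_mem_tendsto_of_fejer (hδ : 0 < δ) (hQ : ∀ w, δ * ‖w‖ ^ 2 ≤ Q w)
    (hQ0 : Tendsto Q (𝓝 0) (𝓝 0)) {S : Set E} (hS : S.Nonempty) {z : ℕ → E}
    (hfejer : ∀ s ∈ S, ∀ k, Q (z (k + 1) - s) + Q (z (k + 1) - z k) ≤ Q (z k - s))
    (hcluster : ∀ (φ : ℕ → ℕ) (w : E), Tendsto (z ∘ φ) atTop (𝓝 w) →
      Tendsto (fun j => z (φ j + 1)) atTop (𝓝 w) → w ∈ S) :
    ∃ w ∈ S, Tendsto z atTop (𝓝 w) := by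
  have hQnn : ∀ w, 0 ≤ Q w := fun w => (by positivity : 0 ≤ δ * ‖w‖ ^ 2).trans (hQ w)
  have hnorm : ∀ w, ‖w‖ ≤ √(Q w / δ) := fun w =>
    (le_abs_self _).trans (Real.abs_le_sqrt ((le_div_iff₀ hδ).2 (by linarith [hQ w])))
  have hzero : ∀ u : ℕ → E, Tendsto (fun k => Q (u k)) atTop (𝓝 0) → Tendsto u atTop (𝓝 0) :=
    fun u hu => squeeze_zero_norm (fun k => hnorm (u k)) (by simpa using (hu.div_const δ).sqrt)
  have hanti : ∀ s ∈ S, Antitone fun k => Q (z k - s) := fun s hs =>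
    antitone_nat_of_succ_le fun k => by linarith [hfejer s hs k, hQnn (z (k + 1) - z k)]
  have hlim : ∀ s ∈ S, Tendsto (fun k => Q (z k - s)) atTop (𝓝 (⨅ k, Q (z k - s))) :=
    fun s hs => tendsto_atTop_ciInf (hanti s hs) ⟨0, by rintro _ ⟨k, rfl⟩; exact hQnn _⟩
  obtain ⟨s, hs⟩ := hS
  have hstep : Tendsto (fun k => z (k + 1) - z k) atTop (𝓝 0) := by
    refine hzero _ (squeeze_zero (fun k => hQnn _)
      (fun k => (by linarith [hfejer s hs k] :
        Q (z (k + 1) - z k) ≤ Q (z k - s) - Q (z (k + 1) - s))) ?_)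
    simpa using (hlim s hs).sub ((hlim s hs).comp (tendsto_add_atTop_nat 1))
  have hbdd : ∀ k, z k ∈ Metric.closedBall s √(Q (z 0 - s) / δ) := fun k => by
    rw [Metric.mem_closedBall, dist_eq_norm]
    exact (hnorm _).trans (Real.sqrt_le_sqrt (by gcongr; exact hanti s hs (Nat.zero_le k)))
  obtain ⟨w, -, φ, hφ, hzφ⟩ := tendsto_subseq_of_bounded Metric.isBounded_closedBall hbdd
  have hw : w ∈ S := hcluster φ w hzφ (by simpa using hzφ.add (hstep.comp hφ.tendsto_atTop))
  refine ⟨w, hw, tendsto_sub_nhds_zero_iff.1 (hzero _ ?_)⟩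
  have hinf : ⨅ k, Q (z k - w) = 0 := tendsto_nhds_unique ((hlim w hw).comp hφ.tendsto_atTop)
    (hQ0.comp (tendsto_sub_nhds_zero_iff.2 hzφ))
  simpa [hinf] using hlim w hw

end Fejer

section PDHG

variable {E F : Type*} [NormedAddCommGroup E] [InnerProductSpace ℝ E] [NormedAddCommGroup F]
  [InnerProductSpace ℝ F] (L : E →L[ℝ] F) (α β : ℝ)

/-- The squared norm of `(u, v)` in the metric `M = [[α⁻¹ I, -Lᵀ], [-L, β⁻¹ I]]`, in which the
PDHG iteration is a proximal-point method. -/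
noncomputable def pdhgNormSq (u : E) (v : F) : ℝ :=
  ‖u‖ ^ 2 / α + ‖v‖ ^ 2 / β - 2 * inner ℝ (L u) v

theorem pdhgNormSq_sub (u u' : E) (v v' : F) :
    pdhgNormSq L α β (u - u') (v - v') = pdhgNormSq L α β u v + pdhgNormSq L α β u' v'
      - 2 * (inner ℝ u u' / α + inner ℝ v v' / β - inner ℝ (L u) v' - inner ℝ (L u') v) := by
  simp only [pdhgNormSq, norm_sub_sq_real, map_sub, inner_sub_left, inner_sub_right]
  ring

variable {L α β}

theorem exists_pos_mul_le_pdhgNormSq (hα : 0 < α) (hβ : 0 < β) (hstep : α * β * ‖L‖ ^ 2 < 1) :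
    ∃ δ > 0, ∀ u v, δ * (‖u‖ ^ 2 + ‖v‖ ^ 2) ≤ pdhgNormSq L α β u v := by
  have hβL : β * ‖L‖ ^ 2 < 1 / α := by
    rw [lt_div_iff₀ hα]
    linarith
  obtain ⟨θ, hθβ, hθα⟩ := exists_between hβL
  have hθ : 0 < θ := lt_of_le_of_lt (by positivity) hθβ
  have hθL : ‖L‖ ^ 2 / θ < 1 / β := by
    rw [div_lt_div_iff₀ hθ hβ]
    linarith
  refine ⟨min (1 / α - θ) (1 / β - ‖L‖ ^ 2 / θ), lt_min (by linarith) (by linarith),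
    fun u v => ?_⟩
  have hyoung : 2 * inner ℝ (L u) v ≤ θ * ‖u‖ ^ 2 + ‖L‖ ^ 2 / θ * ‖v‖ ^ 2 := by
    have hinner : inner ℝ (L u) v ≤ ‖L‖ * ‖u‖ * ‖v‖ :=
      (real_inner_le_norm _ _).trans (by gcongr; exact L.le_opNorm u)
    have hsq : 0 ≤ (θ * ‖u‖ - ‖L‖ * ‖v‖) ^ 2 / θ := by positivity
    have hexp : (θ * ‖u‖ - ‖L‖ * ‖v‖) ^ 2 / θ
        = θ * ‖u‖ ^ 2 + ‖L‖ ^ 2 / θ * ‖v‖ ^ 2 - 2 * (‖L‖ * ‖u‖ * ‖v‖) := by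
      field_simp
      ring
    linarith
  have hu := sq_nonneg ‖u‖
  have hv := sq_nonneg ‖v‖
  have h1 := mul_le_mul_of_nonneg_right (min_le_left (1 / α - θ) (1 / β - ‖L‖ ^ 2 / θ)) hu
  have h2 := mul_le_mul_of_nonneg_right (min_le_right (1 / α - θ) (1 / β - ‖L‖ ^ 2 / θ)) hv
  have hu' : ‖u‖ ^ 2 / α = 1 / α * ‖u‖ ^ 2 := by ring
  have hv' : ‖v‖ ^ 2 / β = 1 / β * ‖v‖ ^ 2 := by ring
  rw [pdhgNormSq, hu', hv']
  linarith

section CompleteSpace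

variable [CompleteSpace E] [CompleteSpace F]

/-- The hypotheses are the variational inequalities of the two proximal steps and the saddle
inequality, with `a₁, as` and `b₁, bs` standing for the values of `f` and `ψ`. -/
theorem pdhgNormSq_add_pdhgNormSq_le (hα : α ≠ 0) (hβ : β ≠ 0) {x₀ x₁ xs : E} {y₀ y₁ ys : F}
    {a₁ as b₁ bs : ℝ}
    (hx : a₁ + inner ℝ (x₀ - α • L.adjoint y₀ - x₁) (xs - x₁) / α ≤ as)
    (hy : b₁ + inner ℝ (y₀ + β • L ((2 : ℝ) • x₁ - x₀) - y₁) (ys - y₁) / β ≤ bs)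
    (hs : as + inner ℝ (L xs) y₁ - b₁ ≤ a₁ + inner ℝ (L x₁) ys - bs) :
    pdhgNormSq L α β (x₁ - xs) (y₁ - ys) + pdhgNormSq L α β (x₁ - x₀) (y₁ - y₀)
      ≤ pdhgNormSq L α β (x₀ - xs) (y₀ - ys) := by
  have hx' : inner ℝ (x₀ - α • L.adjoint y₀ - x₁) (xs - x₁) / α
      = inner ℝ (x₁ - xs) (x₁ - x₀) / α + inner ℝ (L (x₁ - xs)) y₀ := by
    rw [show x₀ - α • L.adjoint y₀ - x₁ = -(x₁ - x₀) - α • L.adjoint y₀ by abel,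
      show xs - x₁ = -(x₁ - xs) by abel, inner_sub_left, inner_neg_neg, real_inner_smul_left,
      inner_neg_right, ContinuousLinearMap.adjoint_inner_left, real_inner_comm (x₁ - x₀),
      real_inner_comm (L _)]
    field_simp
    ring
  have hy' : inner ℝ (y₀ + β • L ((2 : ℝ) • x₁ - x₀) - y₁) (ys - y₁) / β
      = inner ℝ (y₁ - ys) (y₁ - y₀) / β + inner ℝ (L ((2 : ℝ) • x₁ - x₀)) (ys - y₁) := by
    rw [show y₀ + β • L ((2 : ℝ) • x₁ - x₀) - y₁ = -(y₁ - y₀) + β • L ((2 : ℝ) • x₁ - x₀) by abel,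
      show ys - y₁ = -(y₁ - ys) by abel, inner_add_left, inner_neg_neg, real_inner_smul_left,
      real_inner_comm (y₁ - y₀)]
    field_simp
  have hB : inner ℝ (x₁ - xs) (x₁ - x₀) / α + inner ℝ (y₁ - ys) (y₁ - y₀) / β
      - inner ℝ (L (x₁ - xs)) (y₁ - y₀) - inner ℝ (L (x₁ - x₀)) (y₁ - ys) ≤ 0 := by
    rw [hx'] at hx
    rw [hy'] at hy
    simp only [map_sub, two_smul, map_add, inner_sub_left, inner_sub_right,
      inner_add_left] at hx hy ⊢
    linarith
  have hcos := pdhgNormSq_sub L α β (x₁ - xs) (x₁ - x₀) (y₁ - ys) (y₁ - y₀)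
  rw [sub_sub_sub_cancel_left, sub_sub_sub_cancel_left] at hcos
  linarith

variable {f : E → EReal} {ψ : F → EReal}

theorem IsSaddlePointOn.pdhg_fejer (hα : 0 < α) (hβ : 0 < β) (hf : IsProperConvex f)
    (hψ : IsProperConvex ψ) {x₀ x₁ xs : E} {y₀ y₁ ys : F}
    (hs : IsSaddlePointOn univ univ (lagrangian f ψ fun x y => inner ℝ (L x) y) xs ys)
    (hx₁ : IsProxPt f α (x₀ - α • L.adjoint y₀) x₁)
    (hy₁ : IsProxPt ψ β (y₀ + β • L ((2 : ℝ) • x₁ - x₀)) y₁) :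
    pdhgNormSq L α β (x₁ - xs) (y₁ - ys) + pdhgNormSq L α β (x₁ - x₀) (y₁ - y₀)
      ≤ pdhgNormSq L α β (x₀ - xs) (y₀ - ys) := by
  obtain ⟨u, hu⟩ := hf.exists_ne_top
  obtain ⟨v, hv⟩ := hψ.exists_ne_top
  have hfx₁ := hx₁.ne_top hu
  have hψy₁ := hy₁.ne_top hv
  obtain ⟨hfs, hψs⟩ := hs.ne_top_of_lagrangian hf.ne_bot hψ.ne_bot hfx₁ hψy₁
  exact pdhgNormSq_add_pdhgNormSq_le hα.ne' hβ.ne'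
    (hx₁.inner_le hα hf.convex_epigraph hf.ne_bot hfs)
    (hy₁.inner_le hβ hψ.convex_epigraph hψ.ne_bot hψs)
    ((isSaddlePointOn_lagrangian_iff hf.ne_bot hψ.ne_bot hfs hψs).1 hs x₁ hfx₁ y₁ hψy₁)

theorem isSaddlePointOn_of_isProxPt (hα : 0 < α) (hβ : 0 < β) (hf : IsProperConvex f)
    (hψ : IsProperConvex ψ) {x : E} {y : F} (hx : IsProxPt f α (x - α • L.adjoint y) x)
    (hy : IsProxPt ψ β (y + β • L x) y) :
    IsSaddlePointOn univ univ (lagrangian f ψ fun x y => inner ℝ (L x) y) x y := by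
  obtain ⟨u, hu⟩ := hf.exists_ne_top
  obtain ⟨v, hv⟩ := hψ.exists_ne_top
  refine (isSaddlePointOn_lagrangian_iff hf.ne_bot hψ.ne_bot (hx.ne_top hu) (hy.ne_top hv)).2
    fun x' hx' y' hy' => ?_
  have h₁ := hx.inner_le hα hf.convex_epigraph hf.ne_bot hx'
  have h₂ := hy.inner_le hβ hψ.convex_epigraph hψ.ne_bot hy'
  rw [sub_sub_cancel_left, inner_neg_left, real_inner_smul_left,
    ContinuousLinearMap.adjoint_inner_left, neg_div, mul_div_cancel_left₀ _ hα.ne', map_sub,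
    inner_sub_right] at h₁
  rw [add_sub_cancel_left, real_inner_smul_left, mul_div_cancel_left₀ _ hβ.ne',
    inner_sub_right] at h₂
  linarith [real_inner_comm (L x') y, real_inner_comm (L x) y]

theorem isSaddlePointOn_of_tendsto_pdhg (hα : 0 < α) (hβ : 0 < β) (hf : IsProperConvex f)
    (hψ : IsProperConvex ψ) (hfc : IsClosed (epigraph f)) (hψc : IsClosed (epigraph ψ))
    {x : ℕ → E} {y : ℕ → F}
    (hxit : ∀ k, IsProxPt f α (x k - α • L.adjoint (y k)) (x (k + 1)))
    (hyit : ∀ k, IsProxPt ψ β (y k + β • L ((2 : ℝ) • x (k + 1) - x k)) (y (k + 1)))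
    {φ : ℕ → ℕ} {w : E × F} (h₀ : Tendsto (fun j => (x (φ j), y (φ j))) atTop (𝓝 w))
    (h₁ : Tendsto (fun j => (x (φ j + 1), y (φ j + 1))) atTop (𝓝 w)) :
    IsSaddlePointOn univ univ (lagrangian f ψ fun x y => inner ℝ (L x) y) w.1 w.2 := by
  have hx₀ := h₀.fst_nhds
  have hy₀ := h₀.snd_nhds
  have hx₁ := h₁.fst_nhds
  have hy₁ := h₁.snd_nhds
  have hy := IsProxPt.of_tendsto hψc hψ.ne_bot
    (hy₀.add (((L.continuous.tendsto _).comp ((hx₁.const_smul (2 : ℝ)).sub hx₀)).const_smul β))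
    hy₁ fun j => hyit (φ j)
  rw [two_smul, add_sub_cancel_right] at hy
  exact isSaddlePointOn_of_isProxPt hα hβ hf hψ (IsProxPt.of_tendsto hfc hf.ne_bot
    (hx₀.sub (((L.adjoint.continuous.tendsto _).comp hy₀).const_smul α)) hx₁
    fun j => hxit (φ j)) hy

end CompleteSpace

theorem exists_isSaddlePointOn_tendsto_pdhg [ProperSpace E] [ProperSpace F] (hα : 0 < α)
    (hβ : 0 < β) (hstep : α * β * ‖L‖ ^ 2 < 1) (hf : IsProperConvex f) (hψ : IsProperConvex ψ)
    (hfc : IsClosed (epigraph f)) (hψc : IsClosed (epigraph ψ))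
    (hsaddle : ∃ xs ys,
      IsSaddlePointOn univ univ (lagrangian f ψ fun x y => inner ℝ (L x) y) xs ys)
    {x : ℕ → E} {y : ℕ → F}
    (hxit : ∀ k, IsProxPt f α (x k - α • L.adjoint (y k)) (x (k + 1)))
    (hyit : ∀ k, IsProxPt ψ β (y k + β • L ((2 : ℝ) • x (k + 1) - x k)) (y (k + 1))) :
    ∃ xs ys, IsSaddlePointOn univ univ (lagrangian f ψ fun x y => inner ℝ (L x) y) xs ys ∧
      Tendsto x atTop (𝓝 xs) ∧ Tendsto y atTop (𝓝 ys) := by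
  obtain ⟨δ, hδ, hδH⟩ := exists_pos_mul_le_pdhgNormSq hα hβ hstep
  have hcoercive : ∀ w : E × F, δ * ‖w‖ ^ 2 ≤ pdhgNormSq L α β w.1 w.2 := fun w => by
    refine le_trans ?_ (hδH w.1 w.2)
    gcongr
    rcases max_choice ‖w.1‖ ‖w.2‖ with h | h <;>
      simp only [Prod.norm_def, h, le_add_iff_nonneg_right, le_add_iff_nonneg_left] <;> positivity
  have hcont : Continuous fun w : E × F => pdhgNormSq L α β w.1 w.2 := by
    unfold pdhgNormSq
    fun_prop
  obtain ⟨xs, ys, hs⟩ := hsaddle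
  obtain ⟨w, hw, hlim⟩ := exists_mem_tendsto_of_fejer (z := fun k => (x k, y k))
    (S := {w | IsSaddlePointOn univ univ (lagrangian f ψ fun x y => inner ℝ (L x) y) w.1 w.2})
    hδ hcoercive (by simpa [pdhgNormSq] using hcont.tendsto 0) ⟨(xs, ys), hs⟩
    (fun s hs k => IsSaddlePointOn.pdhg_fejer hα hβ hf hψ hs (hxit k) (hyit k))
    fun φ w h₀ h₁ => isSaddlePointOn_of_tendsto_pdhg hα hβ hf hψ hfc hψc hxit hyit h₀ h₁
  exact ⟨w.1, w.2, hw, hlim.fst_nhds, hlim.snd_nhds⟩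

end PDHG

theorem stmt17 (n m : ℕ) (f : Euc n → EReal) (g : Euc m → EReal)
    (hf_proper : (∃ x, f x ≠ ⊤) ∧ ∀ x, f x ≠ ⊥)
    (hg_proper : (∃ y, g y ≠ ⊤) ∧ ∀ y, g y ≠ ⊥)
    (hf_cvx : Convex ℝ {p : Euc n × ℝ | f p.1 ≤ (p.2 : EReal)})
    (hf_closed : IsClosed {p : Euc n × ℝ | f p.1 ≤ (p.2 : EReal)})
    (hg_cvx : Convex ℝ {p : Euc m × ℝ | g p.1 ≤ (p.2 : EReal)})
    (hg_closed : IsClosed {p : Euc m × ℝ | g p.1 ≤ (p.2 : EReal)})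
    (L : Euc n →L[ℝ] Euc m)
    (Lagr : Euc n → Euc m → EReal)
    (hLagr : ∀ x lam, Lagr x lam = f x + ((inner ℝ (L x) lam : ℝ) : EReal) - fenchel g lam)
    (hsaddle : ∃ (x' : Euc n) (lam' : Euc m), ∀ (x : Euc n) (lam : Euc m),
      Lagr x' lam ≤ Lagr x' lam' ∧ Lagr x' lam' ≤ Lagr x lam')
    (α β : ℝ) (hα : 0 < α) (hβ : 0 < β) (hstep : α * β * ‖L‖ ^ 2 < 1)
    (x : ℕ → Euc n) (lam : ℕ → Euc m)
    (hxit : ∀ k, IsProxPt f α (x k - α • (ContinuousLinearMap.adjoint L) (lam k)) (x (k + 1)))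
    (hlamit : ∀ k, IsProxPt (fenchel g) β
      (lam k + β • L ((2 : ℝ) • x (k + 1) - x k)) (lam (k + 1))) :
    ∃ (xs : Euc n) (lams : Euc m),
      (∀ (x' : Euc n) (lam' : Euc m),
        Lagr xs lam' ≤ Lagr xs lams ∧ Lagr xs lams ≤ Lagr x' lams) ∧
      Filter.Tendsto x Filter.atTop (𝓝 xs) ∧
      Filter.Tendsto lam Filter.atTop (𝓝 lams) := by
  obtain rfl : Lagr = lagrangian f (fenchel g) fun x y => inner ℝ (L x) y :=
    funext₂ hLagr
  have hg : IsProperConvex g := ⟨hg_proper.1, hg_proper.2, hg_cvx⟩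
  obtain ⟨xs, lams, hs, hx, hlam⟩ := exists_isSaddlePointOn_tendsto_pdhg hα hβ hstep
    ⟨hf_proper.1, hf_proper.2, hf_cvx⟩ (hg.fenchel hg_closed) hf_closed
    (isClosed_epigraph_fenchel hg_proper.2)
    (let ⟨xs, lams, hs⟩ := hsaddle; ⟨xs, lams, isSaddlePointOn_univ_iff.2 hs⟩) hxit hlamit
  exact ⟨xs, lams, isSaddlePointOn_univ_iff.1 hs, hx, hlam⟩
end
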